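/- Let ν > -1, κ ∈ [0, 2(ν+1)), 𝔞 = ν - κ/2, 𝔟 = ν - κ. Define G_k(x) = (d/dx){L_{k+1}^{2𝔞}(x) - ((k+2𝔞)/k) L_{k-1}^{2𝔞}(x)} for k ∈ ℕ. Then for every ℓ ∈ ℕ_0, G_{2ℓ+1}(x) = Σ_{j=0}^{2ℓ+1} α_{2ℓ+1, j} L_j^ν(x), where α_{2ℓ+1,j} = ((2ℓ+1+2𝔞)/(2ℓ+1)) C(2ℓ-1-j+𝔟, 2ℓ-1-j) - C(2ℓ+1-j+𝔟, 2ℓ+1-j). -/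

import Mathlib

/-! Since `2𝔞 = ν + 𝔟`, both Laguerre polynomials in `G_k` have parameter `ν + 𝔟`. Their
derivatives are `d/dx L_n^{ν+𝔟} = -L_{n-1}^{ν+𝔟+1}`, and the connection formula
`L_n^{α+β+1} = Σ_j C(n-j+β, n-j) L_j^α` expands these in the basis `L_j^ν`. Comparing
coefficients of `x^m`, the connection formula is the Chu–Vandermonde identity for
`C(k+c, k) = multichoose (c+1) k`. -/

open Filter Real MeasureTheory

/-- Generalized binomial coefficient `C(x, m) = x(x-1)⋯(x-m+1)/m!` for `m ∈ ℕ₀`, `0` for `m < 0`. -/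
noncomputable def gchoose (x : ℝ) (m : ℤ) : ℝ :=
  if 0 ≤ m then (∏ i ∈ Finset.range m.toNat, (x - (i : ℝ))) / (Nat.factorial m.toNat : ℝ) else 0

/-- Generalized Laguerre polynomial `L_j^α(x) = Σ_{ℓ=0}^j ((-1)^ℓ/ℓ!) C(j+α, j-ℓ) x^ℓ`. -/
noncomputable def lagL (j : ℕ) (α : ℝ) : ℝ → ℝ :=
  fun x => ∑ l ∈ Finset.range (j + 1),
    ((-1 : ℝ) ^ l / (Nat.factorial l : ℝ)) * gchoose ((j : ℝ) + α) ((j : ℤ) - l) * x ^ l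

open Finset Polynomial
open scoped Nat

theorem Ring.add_multichoose_eq {R : Type*} [CommRing R] [BinomialRing R] (r s : R) (n : ℕ) :
    Ring.multichoose (r + s) n =
      ∑ ij ∈ antidiagonal n, Ring.multichoose r ij.1 * Ring.multichoose s ij.2 := by
  have h := Ring.add_choose_eq (r := -r) (s := -s) n (Commute.all _ _)
  rw [← neg_add, Ring.choose_neg'] at h
  rw [← smul_left_cancel_iff (Int.negOnePow (n : ℤ)), h, smul_sum]
  refine sum_congr rfl fun ij hij => ?_
  rw [Ring.choose_neg', Ring.choose_neg', smul_mul_smul_comm, ← Int.negOnePow_add,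
    ← Nat.cast_add, mem_antidiagonal.mp hij]

theorem gchoose_of_neg (x : ℝ) {m : ℤ} (hm : m < 0) : gchoose x m = 0 :=
  if_neg (not_le.mpr hm)

theorem gchoose_natCast (x : ℝ) (n : ℕ) : gchoose x n = Ring.choose x n := by
  rw [Ring.choose_eq_smul, ← aeval_eq_smeval, ← eval_map_algebraMap, descPochhammer_map,
    descPochhammer_eval_eq_prod_range, smul_eq_mul, gchoose, if_pos (Int.natCast_nonneg n),
    Int.toNat_natCast, div_eq_inv_mul]

theorem gchoose_add_natCast_self (c : ℝ) (k : ℕ) :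
    gchoose (c + k) k = Ring.multichoose (c + 1) k := by
  rw [gchoose_natCast, Ring.multichoose_eq, add_sub_right_comm, add_sub_cancel_right]

theorem sum_range_gchoose_mul_gchoose (α b : ℝ) {m n : ℕ} (hmn : m ≤ n) :
    ∑ j ∈ range (n + 1),
        gchoose ((n : ℝ) - j + b) ((n : ℤ) - j) * gchoose ((j : ℝ) + α) ((j : ℤ) - m)
      = gchoose ((n : ℝ) + α + b + 1) ((n : ℤ) - m) := by
  obtain ⟨k, rfl⟩ := Nat.exists_eq_add_of_le hmn
  rw [← sum_range_add_sum_Ico _ (by omega : m ≤ m + k + 1), sum_Ico_eq_sum_range,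
    show m + k + 1 - m = k + 1 by omega,
    sum_eq_zero fun j hj => by
      rw [gchoose_of_neg ((j : ℝ) + α) (by simp at hj; omega), mul_zero], zero_add]
  calc _ = ∑ i ∈ range (k + 1),
        Ring.multichoose (α + m + 1) i * Ring.multichoose (b + 1) (k - i) := by
        refine sum_congr rfl fun i hi => ?_
        have hik : i ≤ k := Nat.lt_succ_iff.mp (mem_range.mp hi)
        rw [← gchoose_add_natCast_self, ← gchoose_add_natCast_self, mul_comm]
        congr 2 <;> push_cast [Nat.cast_sub hik] <;> ring
    _ = Ring.multichoose (α + m + 1 + (b + 1)) k := by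
        rw [Ring.add_multichoose_eq, Nat.sum_antidiagonal_eq_sum_range_succ_mk]
    _ = _ := by
        rw [show α + m + 1 + (b + 1) = (α + m + b + 1) + 1 by ring, ← gchoose_add_natCast_self]
        congr 1 <;> push_cast <;> ring

theorem lagL_eq_sum_range_of_le (α x : ℝ) {j n : ℕ} (hjn : j ≤ n) :
    lagL j α x = ∑ m ∈ range (n + 1),
      ((-1 : ℝ) ^ m / (m ! : ℝ)) * gchoose ((j : ℝ) + α) ((j : ℤ) - m) * x ^ m :=
  sum_subset (range_subset_range.mpr (by omega)) fun m _ hm => by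
    rw [gchoose_of_neg _ (by simp at hm; omega), mul_zero, zero_mul]

theorem sum_range_gchoose_mul_lagL (α b x : ℝ) {n N : ℕ} (hnN : n ≤ N) :
    ∑ j ∈ range (N + 1), gchoose ((n : ℝ) - j + b) ((n : ℤ) - j) * lagL j α x
      = lagL n (α + b + 1) x := by
  rw [← sum_subset (range_subset_range.mpr (by omega : n + 1 ≤ N + 1)) fun j _ hj => by
    rw [gchoose_of_neg _ (by simp at hj; omega), zero_mul]]
  calc _ = ∑ j ∈ range (n + 1), ∑ m ∈ range (n + 1),
          gchoose ((n : ℝ) - j + b) ((n : ℤ) - j) *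
            (((-1 : ℝ) ^ m / (m ! : ℝ)) * gchoose ((j : ℝ) + α) ((j : ℤ) - m) * x ^ m) := by
        refine sum_congr rfl fun j hj => ?_
        rw [lagL_eq_sum_range_of_le α x (Nat.lt_succ_iff.mp (mem_range.mp hj)), mul_sum]
    _ = ∑ m ∈ range (n + 1), ((-1 : ℝ) ^ m / (m ! : ℝ)) * x ^ m *
          ∑ j ∈ range (n + 1),
            gchoose ((n : ℝ) - j + b) ((n : ℤ) - j) * gchoose ((j : ℝ) + α) ((j : ℤ) - m) := by
        rw [sum_comm]
        simp only [mul_sum]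
        refine sum_congr rfl fun m _ => sum_congr rfl fun j _ => by ring
    _ = lagL n (α + b + 1) x := by
        refine sum_congr rfl fun m hm => ?_
        rw [sum_range_gchoose_mul_gchoose α b (Nat.lt_succ_iff.mp (mem_range.mp hm))]
        ring_nf

theorem lagL_zero (α : ℝ) : lagL 0 α = fun _ => 1 := by
  funext x
  simp [lagL, gchoose]

theorem hasDerivAt_lagL_succ (n : ℕ) (α x : ℝ) :
    HasDerivAt (lagL (n + 1) α) (-lagL n (α + 1) x) x := by
  have h : HasDerivAt (lagL (n + 1) α) (∑ m ∈ range (n + 2),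
      ((-1 : ℝ) ^ m / (m ! : ℝ)) * gchoose ((n + 1 : ℕ) + α) ((n + 1 : ℕ) - m : ℤ) *
        ((m : ℝ) * x ^ (m - 1))) x :=
    HasDerivAt.fun_sum fun m _ => (hasDerivAt_pow m x).const_mul _
  convert h using 1
  rw [sum_range_succ', lagL, ← sum_neg_distrib]
  simp only [Nat.cast_zero, zero_mul, mul_zero, add_zero]
  refine sum_congr rfl fun m _ => ?_
  rw [Nat.factorial_succ]
  push_cast
  rw [show (n : ℝ) + 1 + α = n + (α + 1) by ring, show (n : ℤ) + 1 - (m + 1) = n - m by ring]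
  field_simp
  ring

theorem hasDerivAt_lagL_eq_neg_sum_lagL (α b x : ℝ) {n N : ℕ} (hnN : n ≤ N + 1) :
    HasDerivAt (lagL n (α + b))
      (-∑ j ∈ range (N + 1),
        gchoose ((n : ℝ) - 1 - j + b) ((n : ℤ) - 1 - j) * lagL j α x) x := by
  cases n with
  | zero =>
    rw [lagL_zero, sum_eq_zero fun j _ => by rw [gchoose_of_neg _ (by omega), zero_mul], neg_zero]
    exact hasDerivAt_const x 1
  | succ n =>
    convert hasDerivAt_lagL_succ n (α + b) x using 2
    rw [← sum_range_gchoose_mul_lagL α b x (by omega : n ≤ N)]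
    push_cast
    simp only [add_sub_cancel_right]

theorem G_odd_expansion_general (ν κ : ℝ) (l : ℕ) (x : ℝ) :
    deriv (fun y : ℝ =>
        lagL (2 * l + 2) (2 * (ν - κ / 2)) y
          - ((2 * (l : ℝ) + 1 + 2 * (ν - κ / 2)) / (2 * (l : ℝ) + 1))
              * lagL (2 * l) (2 * (ν - κ / 2)) y) x
      = ∑ j ∈ Finset.range (2 * l + 2),
          (((2 * (l : ℝ) + 1 + 2 * (ν - κ / 2)) / (2 * (l : ℝ) + 1))
              * gchoose (2 * (l : ℝ) - 1 - (j : ℝ) + (ν - κ)) (2 * (l : ℤ) - 1 - (j : ℤ))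
            - gchoose (2 * (l : ℝ) + 1 - (j : ℝ) + (ν - κ)) (2 * (l : ℤ) + 1 - (j : ℤ)))
            * lagL j ν x := by
  set c := (2 * (l : ℝ) + 1 + 2 * (ν - κ / 2)) / (2 * (l : ℝ) + 1)
  rw [show 2 * (ν - κ / 2) = ν + (ν - κ) by ring]
  have hG := (hasDerivAt_lagL_eq_neg_sum_lagL ν (ν - κ) x (le_refl (2 * l + 2))).fun_sub
    ((hasDerivAt_lagL_eq_neg_sum_lagL ν (ν - κ) x
      (by omega : 2 * l ≤ 2 * l + 1 + 1)).const_mul c)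
  rw [hG.deriv, mul_neg, sub_neg_eq_add, mul_sum, ← sum_neg_distrib, ← sum_add_distrib]
  refine sum_congr rfl fun j _ => ?_
  push_cast
  ring_nf

theorem G_odd_expansion (ν κ : ℝ) (hν : -1 < ν) (hκ0 : 0 ≤ κ) (hκ1 : κ < 2 * (ν + 1))
    (l : ℕ) (x : ℝ) :
    deriv (fun y : ℝ =>
        lagL (2 * l + 2) (2 * (ν - κ / 2)) y
          - ((2 * (l : ℝ) + 1 + 2 * (ν - κ / 2)) / (2 * (l : ℝ) + 1))
              * lagL (2 * l) (2 * (ν - κ / 2)) y) x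
      = ∑ j ∈ Finset.range (2 * l + 2),
          (((2 * (l : ℝ) + 1 + 2 * (ν - κ / 2)) / (2 * (l : ℝ) + 1))
              * gchoose (2 * (l : ℝ) - 1 - (j : ℝ) + (ν - κ)) (2 * (l : ℤ) - 1 - (j : ℤ))
            - gchoose (2 * (l : ℝ) + 1 - (j : ℝ) + (ν - κ)) (2 * (l : ℤ) + 1 - (j : ℤ)))
            * lagL j ν x :=
  G_odd_expansion_general ν κ l x
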